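/- Let (𝒴,ℓ) be a separable near-metric value space with 0 < ℓ̄ < ∞. If (𝒴,ℓ) is totally bounded, then SUOL_{(𝒳,ρ,𝒴,ℓ)} = SUOL_{(𝒳,ρ,{0,1},ℓ01)}. If (𝒴,ℓ) is not totally bounded, then SUOL_{(𝒳,ρ,𝒴,ℓ)} = SUOL_{(𝒳,ρ,ℕ,ℓ01)}. -/

import Mathlib

open MeasureTheory Filter Topology

/-- A near-metric loss structure on `Y`: symmetric, point-discerning, with a
relaxed triangle inequality with constant `c`. -/
structure NearMetric (Y : Type) where
  loss : Y → Y → ℝ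
  nonneg : ∀ y₁ y₂, 0 ≤ loss y₁ y₂
  symm : ∀ y₁ y₂, loss y₁ y₂ = loss y₂ y₁
  eq_zero_iff : ∀ y₁ y₂, loss y₁ y₂ = 0 ↔ y₁ = y₂
  c : ℝ
  c_nonneg : 0 ≤ c
  triangle : ∀ y₁ y₂ y₃, loss y₁ y₃ ≤ c * (loss y₂ y₁ + loss y₂ y₃)

namespace NearMetric

/-- `(Y, ℓ)` is separable: there is a countable `ℓ`-dense sequence. -/
def Separable {Y : Type} (L : NearMetric Y) : Prop :=
  ∃ s : ℕ → Y, ∀ y : Y, ∀ ε : ℝ, 0 < ε → ∃ i : ℕ, L.loss (s i) y < ε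

/-- `0 < ℓ̄ < ∞`: the supremum of the loss is positive and finite. -/
def BoundedPos {Y : Type} (L : NearMetric Y) : Prop :=
  (∃ y₁ y₂, 0 < L.loss y₁ y₂) ∧ (∃ M : ℝ, ∀ y₁ y₂, L.loss y₁ y₂ ≤ M)

/-- The σ-algebra on `Y` generated by `ℓ`-balls. -/
def mSpace {Y : Type} (L : NearMetric Y) : MeasurableSpace Y :=
  MeasurableSpace.generateFrom {B | ∃ (y : Y) (ε : ℝ), B = {y' | L.loss y y' < ε}}

/-- Measurability of a map into `Y` with respect to the ball σ-algebra of `L`. -/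
def MeasurableFun {X Y : Type} [MeasurableSpace X] (L : NearMetric Y) (f : X → Y) : Prop :=
  @Measurable X Y _ L.mSpace f

end NearMetric

/-- The 0–1 loss on any type with decidable equality. -/
def l01 (Y : Type) [DecidableEq Y] : NearMetric Y where
  loss y₁ y₂ := if y₁ = y₂ then 0 else 1
  nonneg := by intro a b; split <;> norm_num
  symm := by intro a b; simp [eq_comm]
  eq_zero_iff := by intro a b; split <;> simp_all
  c := 1
  c_nonneg := by norm_num
  triangle := by
    intro a b c
    by_cases h1 : a = c <;> by_cases h2 : b = a <;> by_cases h3 : b = c <;>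
      simp_all

/-- An online learning rule: a sequence of measurable maps
`f t : 𝒳^t × 𝒴^t × 𝒳 → 𝒴` (the history at time `t+1` has length `t`). -/
def IsLearningRule {X Y : Type} [MeasurableSpace X] (L : NearMetric Y)
    (f : (t : ℕ) → (Fin t → X) → (Fin t → Y) → X → Y) : Prop :=
  letI : MeasurableSpace Y := L.mSpace
  ∀ t : ℕ, Measurable fun p : (Fin t → X) × (Fin t → Y) × X => f t p.1 p.2.1 p.2.2

/-- The average loss of learning rule `f` on target `fstar` under process `Xp`
up to horizon `T`, at sample `ω`. -/
noncomputable def avgLoss {X Y Ω : Type} (L : NearMetric Y) (Xp : ℕ → Ω → X)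
    (f : (t : ℕ) → (Fin t → X) → (Fin t → Y) → X → Y) (fstar : X → Y)
    (T : ℕ) (ω : Ω) : ℝ :=
  (T : ℝ)⁻¹ * ∑ t ∈ Finset.range T,
    L.loss (f t (fun i => Xp i.1 ω) (fun i => fstar (Xp i.1 ω)) (Xp t ω)) (fstar (Xp t ω))

/-- The rule `f` is (strongly) consistent for target `fstar` under the process `Xp`. -/
def Consistent {X Y Ω : Type} [MeasurableSpace Ω] (μ : Measure Ω) (L : NearMetric Y)
    (Xp : ℕ → Ω → X) (f : (t : ℕ) → (Fin t → X) → (Fin t → Y) → X → Y)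
    (fstar : X → Y) : Prop :=
  ∀ᵐ ω ∂μ, Tendsto (fun T => avgLoss L Xp f fstar T ω) atTop (𝓝 0)

/-- `Xp ∈ SUOL`: the process admits strong universal online learning for
the value space `(Y, L)`. -/
def SUOL {X Y Ω : Type} [MeasurableSpace X] [MeasurableSpace Ω] (μ : Measure Ω)
    (L : NearMetric Y) (Xp : ℕ → Ω → X) : Prop :=
  ∃ f : (t : ℕ) → (Fin t → X) → (Fin t → Y) → X → Y,
    IsLearningRule L f ∧
    ∀ fstar : X → Y, L.MeasurableFun fstar → Consistent μ L Xp f fstar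

/-- `(Y, L)` is totally bounded: for every `ε > 0` it is covered by finitely many
`ε`-balls. -/
def NearMetric.TotBounded {Y : Type} (L : NearMetric Y) : Prop :=
  ∀ ε : ℝ, 0 < ε → ∃ F : Finset Y, ∀ y : Y, ∃ y' ∈ F, L.loss y' y ≤ ε

/-!
The two directions are reductions between learning rules.

From `(Y, ℓ)` down to a countable label set: embed the labels as `ℓ`-separated points of `Y` and
decode each prediction to the label whose point is close to it. Two separated points always exist
since `ℓ̄ > 0`, and an infinite separated sequence exists exactly when `(Y, ℓ)` is not totally
bounded.

From labels back up to `(Y, ℓ)`: quantize `Y` at scale `1/(k+1)` by a measurable nearest-index map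
into `ℕ` (with finite range when `(Y, ℓ)` is totally bounded, where one-vs-all binary rules learn
finitely many labels), and run a `0–1` learner on the quantized labels at every scale. At time `t`
use the largest scale `k ≤ √t` such that every scale `j ≤ k` has made at most `t / 2^j` mistakes so
far. Every scale is eventually selected, and the mistakes at the selected scales still average out,
so the relaxed triangle inequality bounds the average loss by `c (ℓ̄ · mistakes + 1/(k+1))`, which
tends to zero.
-/

section ZeroOne

variable {Z : Type} [DecidableEq Z]

theorem l01_loss_eq (a b : Z) : (l01 Z).loss a b = if a = b then 0 else 1 := rfl

theorem l01_loss_le_one (a b : Z) : (l01 Z).loss a b ≤ 1 := by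
  rw [l01_loss_eq]; split <;> norm_num

theorem l01_mSpace [Countable Z] [MeasurableSpace Z] [DiscreteMeasurableSpace Z] :
    (l01 Z).mSpace = ‹MeasurableSpace Z› := by
  ext s
  simp only [MeasurableSet.of_discrete, iff_true]
  rw [← Set.biUnion_of_singleton s]
  refine MeasurableSet.biUnion s.to_countable fun z _ => ?_
  have : ({z} : Set Z) = {y | (l01 Z).loss z y < 1} := by
    ext y; by_cases h : z = y <;> simp [l01_loss_eq, h, eq_comm]
  exact this ▸ MeasurableSpace.measurableSet_generateFrom ⟨z, 1, rfl⟩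

variable {X : Type} [MeasurableSpace X] [Countable Z] [MeasurableSpace Z]
  [DiscreteMeasurableSpace Z]

theorem measurableFun_l01_iff {f : X → Z} : (l01 Z).MeasurableFun f ↔ Measurable f := by
  rw [NearMetric.MeasurableFun, l01_mSpace]

theorem isLearningRule_l01_iff {f : (t : ℕ) → (Fin t → X) → (Fin t → Z) → X → Z} :
    IsLearningRule (l01 Z) f ↔
      ∀ t, Measurable fun p : (Fin t → X) × (Fin t → Z) × X => f t p.1 p.2.1 p.2.2 := by
  rw [IsLearningRule, l01_mSpace]

end ZeroOne

namespace NearMetric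

variable {Y : Type} (L : NearMetric Y)

theorem loss_self (y : Y) : L.loss y y = 0 := (L.eq_zero_iff y y).2 rfl

theorem one_le_c {y₁ y₂ : Y} (h : 0 < L.loss y₁ y₂) : 1 ≤ L.c := by
  have := L.triangle y₁ y₁ y₂
  rw [L.loss_self] at this
  nlinarith

theorem measurable_loss (z : Y) : Measurable[L.mSpace] (L.loss z) :=
  letI := L.mSpace
  measurable_of_Iio fun a => MeasurableSpace.measurableSet_generateFrom ⟨z, a, rfl⟩

theorem loss_le_mul_l01_add {M : ℝ} (hM : ∀ y₁ y₂, L.loss y₁ y₂ ≤ M) (f : ℕ → Y) (n m : ℕ)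
    (y : Y) :
    L.loss (f n) y ≤ L.c * (M * (l01 ℕ).loss n m + L.loss (f m) y) := by
  refine (L.triangle _ (f m) y).trans
    (mul_le_mul_of_nonneg_left (add_le_add_left ?_ _) L.c_nonneg)
  rw [l01_loss_eq]
  split_ifs with h
  · simp [h, L.loss_self]
  · simpa using hM _ _

variable {L} in
theorem exists_pairwise_lt_loss_of_not_totBounded (h : ¬ L.TotBounded) :
    ∃ ε > 0, ∃ e : ℕ → Y, Pairwise fun m n => ε < L.loss (e m) (e n) := by
  simp only [NearMetric.TotBounded, not_forall, not_exists, not_and, not_le] at h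
  obtain ⟨ε, hε, hfar⟩ := h
  obtain ⟨e, -, he⟩ := exists_seq_of_forall_finset_exists (fun _ => True)
    (fun a b => ε < L.loss a b) fun F _ => (hfar F).imp fun y hy => ⟨trivial, hy⟩
  refine ⟨ε, hε, e, fun m n hmn => ?_⟩
  rcases hmn.lt_or_gt with hlt | hlt
  · exact he m n hlt
  · exact L.symm (e n) (e m) ▸ he n m hlt

theorem exists_measurable_quantizer (s : ℕ → ℕ → Y)
    (hs : ∀ k y, ∃ i, L.loss (s k i) y ≤ ((k : ℝ) + 1)⁻¹) :
    ∃ q : ℕ → Y → ℕ, (∀ k, Measurable[L.mSpace] (q k)) ∧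
      (∀ k y, L.loss (s k (q k y)) y ≤ ((k : ℝ) + 1)⁻¹) ∧
      ∀ k y i, L.loss (s k i) y ≤ ((k : ℝ) + 1)⁻¹ → q k y ≤ i :=
  ⟨fun k y => Nat.find (hs k y),
    fun _ => measurable_find _ fun _ => measurableSet_le (L.measurable_loss _) measurable_const,
    fun k y => Nat.find_spec (hs k y), fun _ _ _ h => Nat.find_min' _ h⟩

variable {L} in
theorem TotBounded.exists_finite_seq [Nonempty Y] (h : L.TotBounded) {ε : ℝ} (hε : 0 < ε) :
    ∃ N, ∃ s : ℕ → Y, ∀ y, ∃ i < N, L.loss (s i) y ≤ ε := by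
  obtain ⟨F, hF⟩ := h ε hε
  refine ⟨F.toList.length, fun i => F.toList.getD i (Classical.arbitrary Y), fun y => ?_⟩
  obtain ⟨y', hy'F, hy'⟩ := hF y
  obtain ⟨i, hi, rfl⟩ := List.mem_iff_getElem.1 (F.mem_toList.2 hy'F)
  exact ⟨i, hi, by simpa only [List.getD_eq_getElem _ _ hi] using hy'⟩

end NearMetric

section Cesaro

variable {u v : ℕ → ℝ}

theorem tendsto_cesaro_zero_of_le (hu : ∀ t, 0 ≤ u t) (huv : ∀ t, u t ≤ v t)
    (hv : Tendsto (fun T : ℕ => (T : ℝ)⁻¹ * ∑ t ∈ Finset.range T, v t) atTop (𝓝 0)) :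
    Tendsto (fun T : ℕ => (T : ℝ)⁻¹ * ∑ t ∈ Finset.range T, u t) atTop (𝓝 0) :=
  squeeze_zero (fun T => mul_nonneg (by positivity) (Finset.sum_nonneg fun t _ => hu t))
    (fun T => mul_le_mul_of_nonneg_left (Finset.sum_le_sum fun t _ => huv t) (by positivity)) hv

theorem tendsto_cesaro_zero_add
    (hu : Tendsto (fun T : ℕ => (T : ℝ)⁻¹ * ∑ t ∈ Finset.range T, u t) atTop (𝓝 0))
    (hv : Tendsto (fun T : ℕ => (T : ℝ)⁻¹ * ∑ t ∈ Finset.range T, v t) atTop (𝓝 0)) :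
    Tendsto (fun T : ℕ => (T : ℝ)⁻¹ * ∑ t ∈ Finset.range T, (u t + v t)) atTop (𝓝 0) := by
  simpa [Finset.sum_add_distrib, mul_add] using hu.add hv

theorem tendsto_cesaro_zero_const_mul (c : ℝ)
    (hu : Tendsto (fun T : ℕ => (T : ℝ)⁻¹ * ∑ t ∈ Finset.range T, u t) atTop (𝓝 0)) :
    Tendsto (fun T : ℕ => (T : ℝ)⁻¹ * ∑ t ∈ Finset.range T, c * u t) atTop (𝓝 0) := by
  simpa [← Finset.mul_sum, mul_left_comm] using hu.const_mul c

theorem tendsto_cesaro_zero_sum {ι : Type} (s : Finset ι) {w : ι → ℕ → ℝ}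
    (hw : ∀ i ∈ s, Tendsto (fun T : ℕ => (T : ℝ)⁻¹ * ∑ t ∈ Finset.range T, w i t) atTop (𝓝 0)) :
    Tendsto (fun T : ℕ => (T : ℝ)⁻¹ * ∑ t ∈ Finset.range T, ∑ i ∈ s, w i t) atTop (𝓝 0) := by
  simpa [Finset.sum_comm (s := Finset.range _), Finset.mul_sum] using tendsto_finsetSum s hw

end Cesaro

theorem tendsto_nat_sqrt_atTop : Tendsto Nat.sqrt atTop atTop :=
  tendsto_atTop_atTop.2 fun K => ⟨K * K, fun _ hn => Nat.le_sqrt.2 hn⟩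

theorem tendsto_nat_sqrt_add_one_div :
    Tendsto (fun T : ℕ => ((Nat.sqrt T : ℝ) + 1) / T) atTop (𝓝 0) := by
  refine squeeze_zero' (Eventually.of_forall fun T => by positivity) ?_
    ((tendsto_const_div_atTop_nhds_zero_nat 2).comp tendsto_nat_sqrt_atTop)
  filter_upwards [eventually_ge_atTop 1] with T hT
  have hs : (1 : ℝ) ≤ Nat.sqrt T := by exact_mod_cast Nat.le_sqrt.2 hT
  have hsq : (Nat.sqrt T : ℝ) * Nat.sqrt T ≤ T := by exact_mod_cast Nat.sqrt_le T
  rw [Function.comp_apply, div_le_div_iff₀ (by positivity) (by positivity)]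
  nlinarith

section Diagonal

open Finset

variable {l : ℕ → ℕ → ℝ} {k : ℕ → ℕ}

theorem sum_filter_scale_eq_le (h0 : ∀ j s, 0 ≤ l j s) (h1 : ∀ j s, l j s ≤ 1)
    (hsel : ∀ t, ∑ s ∈ range t, l (k t) s ≤ t * 2⁻¹ ^ k t) (T j : ℕ) :
    ∑ t ∈ (range T).filter (fun t => k t = j), l j t ≤ T * 2⁻¹ ^ j + 1 := by
  set S := (range T).filter (fun t => k t = j)
  rcases S.eq_empty_or_nonempty with hS | hS
  · rw [hS, sum_empty]; positivity
  -- the whole fiber lies before its last time `tm`, where scale `j` was selected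
  set tm := S.max' hS
  have htm : tm < T ∧ k tm = j :=
    (mem_filter.1 (S.max'_mem hS)).imp_left mem_range.1
  calc ∑ t ∈ S, l j t ≤ ∑ t ∈ range (tm + 1), l j t :=
        sum_le_sum_of_subset_of_nonneg
          (fun t ht => mem_range.2 (Nat.lt_succ_of_le (S.le_max' t ht))) fun t _ _ => h0 j t
    _ = ∑ t ∈ range tm, l (k tm) t + l j tm := by rw [sum_range_succ, htm.2]
    _ ≤ tm * 2⁻¹ ^ j + 1 := add_le_add (htm.2 ▸ hsel tm) (h1 j tm)
    _ ≤ T * 2⁻¹ ^ j + 1 := by gcongr; exact_mod_cast htm.1.le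

theorem sum_Icc_geom_add_one_le (T : ℝ) (hT : 0 ≤ T) (K n : ℕ) :
    ∑ j ∈ Icc K n, (T * 2⁻¹ ^ j + 1) ≤ T * (2 * 2⁻¹ ^ K) + (n + 1) := by
  rw [sum_add_distrib, ← mul_sum, sum_const, nsmul_one, Nat.card_Icc]
  gcongr
  · calc ∑ j ∈ Icc K n, (2⁻¹ : ℝ) ^ j = ∑ j ∈ Ico K (n + 1), (2⁻¹ : ℝ) ^ j := by
          rw [Ico_add_one_right_eq_Icc]
      _ ≤ 2⁻¹ ^ K / (1 - 2⁻¹) := geom_sum_Ico_le_of_lt_one (by norm_num) (by norm_num)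
      _ = 2 * 2⁻¹ ^ K := by ring
  · exact_mod_cast Nat.sub_le _ _

theorem sum_diag_le_of_eventually_ge (h0 : ∀ j s, 0 ≤ l j s) (h1 : ∀ j s, l j s ≤ 1)
    (hsel : ∀ t, ∑ s ∈ range t, l (k t) s ≤ t * 2⁻¹ ^ k t) (hbd : ∀ t, k t ≤ Nat.sqrt t)
    {K t₀ : ℕ} (hK : ∀ t ≥ t₀, K ≤ k t) (T : ℕ) :
    ∑ t ∈ range T, l (k t) t ≤ t₀ + (T * (2 * 2⁻¹ ^ K) + (Nat.sqrt T + 1)) := by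
  rw [← sum_filter_add_sum_filter_not (range T) (fun t => k t < K)]
  gcongr ?_ + ?_
  · have hcard : ((range T).filter fun t => k t < K).card ≤ t₀ := by
      refine (card_le_card fun t ht => mem_range.2 ?_).trans (card_range t₀).le
      by_contra! hle
      exact (mem_filter.1 ht).2.not_ge (hK t hle)
    calc _ ≤ ((range T).filter fun t => k t < K).card • (1 : ℝ) :=
          sum_le_card_nsmul _ _ _ fun t _ => h1 _ t
      _ ≤ t₀ := by rw [nsmul_one]; exact_mod_cast hcard
  · have hmaps : ∀ t ∈ (range T).filter (fun t => ¬ k t < K), k t ∈ Icc K (Nat.sqrt T) := by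
      intro t ht
      rw [mem_filter, mem_range, not_lt] at ht
      exact mem_Icc.2 ⟨ht.2, (hbd t).trans (Nat.sqrt_le_sqrt ht.1.le)⟩
    rw [← sum_fiberwise_of_maps_to hmaps]
    refine (sum_le_sum fun j _ => ?_).trans (sum_Icc_geom_add_one_le T T.cast_nonneg K _)
    refine le_trans (le_of_eq (sum_congr rfl fun t ht => by rw [(mem_filter.1 ht).2]))
      (le_trans (sum_le_sum_of_subset_of_nonneg ?_ fun t _ _ => h0 j t)
        (sum_filter_scale_eq_le h0 h1 hsel T j))
    exact filter_subset_filter _ (filter_subset _ _)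

theorem tendsto_cesaro_diag (h0 : ∀ j s, 0 ≤ l j s) (h1 : ∀ j s, l j s ≤ 1)
    (hsel : ∀ t, ∑ s ∈ range t, l (k t) s ≤ t * 2⁻¹ ^ k t) (hbd : ∀ t, k t ≤ Nat.sqrt t)
    (hk : Tendsto k atTop atTop) :
    Tendsto (fun T : ℕ => (T : ℝ)⁻¹ * ∑ t ∈ range T, l (k t) t) atTop (𝓝 0) := by
  refine tendsto_order.2 ⟨fun a ha => Eventually.of_forall fun T =>
    ha.trans_le (mul_nonneg (by positivity) (sum_nonneg fun t _ => h0 _ t)), fun a ha => ?_⟩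
  obtain ⟨K, hK⟩ := exists_pow_lt_of_lt_one (show 0 < a / 4 by positivity)
    (show (2⁻¹ : ℝ) < 1 by norm_num)
  obtain ⟨t₀, ht₀⟩ := eventually_atTop.1 (tendsto_atTop.1 hk K)
  have hsmall : Tendsto (fun T : ℕ => (t₀ : ℝ) / T + ((Nat.sqrt T : ℝ) + 1) / T) atTop (𝓝 0) := by
    simpa using (tendsto_const_div_atTop_nhds_zero_nat (t₀ : ℝ)).add tendsto_nat_sqrt_add_one_div
  filter_upwards [hsmall.eventually (gt_mem_nhds (half_pos ha)), eventually_gt_atTop 0]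
    with T hT hTpos
  calc (T : ℝ)⁻¹ * ∑ t ∈ range T, l (k t) t
      ≤ (T : ℝ)⁻¹ * (t₀ + (T * (2 * 2⁻¹ ^ K) + (Nat.sqrt T + 1))) := by
        gcongr; exact sum_diag_le_of_eventually_ge h0 h1 hsel hbd ht₀ T
    _ = ((t₀ : ℝ) / T + ((Nat.sqrt T : ℝ) + 1) / T) + 2 * 2⁻¹ ^ K := by
        field_simp; ring
    _ < a / 2 + a / 2 := by gcongr; linarith
    _ = a := add_halves a

end Diagonal

section ScaleSelection

open Finset

/-- Capping the scale at `√t` keeps the number of distinct scales used before time `T` in `o(T)`. -/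
noncomputable def selectScale (c : ℕ → ℝ) (t : ℕ) : ℕ :=
  open Classical in Nat.findGreatest (fun k => ∀ j ≤ k, c j ≤ t * 2⁻¹ ^ j) (Nat.sqrt t)

variable {c : ℕ → ℝ} {t : ℕ}

theorem selectScale_le_sqrt : selectScale c t ≤ Nat.sqrt t := Nat.findGreatest_le _

theorem le_selectScale {k : ℕ} (hk : k ≤ Nat.sqrt t) (h : ∀ j ≤ k, c j ≤ t * 2⁻¹ ^ j) :
    k ≤ selectScale c t :=
  Nat.le_findGreatest hk h

theorem le_of_le_selectScale (h0 : c 0 ≤ t) {j : ℕ} (hj : j ≤ selectScale c t) :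
    c j ≤ t * 2⁻¹ ^ j := by
  refine Nat.findGreatest_spec (m := 0) (P := fun k => ∀ j ≤ k, c j ≤ t * 2⁻¹ ^ j)
    (Nat.zero_le _) (fun j hj => ?_) j hj
  simpa [Nat.le_zero.1 hj] using h0

variable {l : ℕ → ℕ → ℝ}

theorem tendsto_selectScale_atTop
    (hl : ∀ j, Tendsto (fun T : ℕ => (T : ℝ)⁻¹ * ∑ s ∈ range T, l j s) atTop (𝓝 0)) :
    Tendsto (fun t => selectScale (fun j => ∑ s ∈ range t, l j s) t) atTop atTop := by
  refine tendsto_atTop.2 fun K => ?_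
  have hfine : ∀ᶠ t : ℕ in atTop, ∀ j ∈ Set.Iic K, ∑ s ∈ range t, l j s ≤ t * 2⁻¹ ^ j := by
    refine (eventually_all_finite (Set.finite_Iic K)).2 fun j _ => ?_
    filter_upwards [(hl j).eventually (gt_mem_nhds (by positivity : (0 : ℝ) < 2⁻¹ ^ j)),
      eventually_gt_atTop 0] with t ht htpos
    exact (inv_mul_lt_iff₀ (by exact_mod_cast htpos)).1 ht |>.le
  filter_upwards [tendsto_nat_sqrt_atTop.eventually_ge_atTop K, hfine] with t hKt ht
  exact le_selectScale hKt ht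

theorem tendsto_cesaro_selectScale (h0 : ∀ j s, 0 ≤ l j s) (h1 : ∀ j s, l j s ≤ 1)
    (hl : ∀ j, Tendsto (fun T : ℕ => (T : ℝ)⁻¹ * ∑ s ∈ range T, l j s) atTop (𝓝 0)) :
    Tendsto (fun T : ℕ => (T : ℝ)⁻¹ *
      ∑ t ∈ range T, l (selectScale (fun j => ∑ s ∈ range t, l j s) t) t) atTop (𝓝 0) := by
  refine tendsto_cesaro_diag h0 h1
    (fun t => le_of_le_selectScale (c := fun j => ∑ s ∈ range t, l j s) ?_ le_rfl)
    (fun t => selectScale_le_sqrt) (tendsto_selectScale_atTop hl)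
  simpa using sum_le_card_nsmul (range t) (l 0) 1 fun s _ => h1 0 s

end ScaleSelection

section Decoding

variable {X Y Ω : Type} [MeasurableSpace X] [MeasurableSpace Ω] {μ : Measure Ω}
  {Xp : ℕ → Ω → X} {L : NearMetric Y}

theorem suol_l01_of_suol_of_decoder {Z : Type} [DecidableEq Z] [Countable Z] [MeasurableSpace Z]
    [DiscreteMeasurableSpace Z] (e : Z → Y) (dec : Y → Z) {δ : ℝ} (hδ : 0 < δ)
    (hdec : Measurable[L.mSpace] dec) (hmargin : ∀ y z, dec y ≠ z → δ ≤ L.loss y (e z))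
    (h : SUOL μ L Xp) : SUOL μ (l01 Z) Xp := by
  let _ := L.mSpace
  obtain ⟨f, hf, hfc⟩ := h
  refine ⟨fun t xs zs x => dec (f t xs (e ∘ zs) x), isLearningRule_l01_iff.2 fun t => ?_,
    fun fstar hfstar => ?_⟩
  · have : Measurable fun p : (Fin t → X) × (Fin t → Z) × X => (p.1, e ∘ p.2.1, p.2.2) := by
      fun_prop
    exact hdec.comp ((hf t).comp this)
  · have hcons :=
      hfc (e ∘ fstar) ((measurable_of_countable e).comp (measurableFun_l01_iff.1 hfstar))
    filter_upwards [hcons] with ω hω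
    refine tendsto_cesaro_zero_of_le (fun t => (l01 Z).nonneg _ _) (fun t => ?_)
      (tendsto_cesaro_zero_const_mul δ⁻¹ hω)
    rw [l01_loss_eq]
    split_ifs with hdt
    · exact mul_nonneg (inv_nonneg.2 hδ.le) (L.nonneg _ _)
    · rw [← inv_mul_cancel₀ hδ.ne']
      exact mul_le_mul_of_nonneg_left (hmargin _ _ hdt) (inv_nonneg.2 hδ.le)

theorem suol_l01_bool_of_suol {y₁ y₂ : Y} (hpos : 0 < L.loss y₁ y₂) (h : SUOL μ L Xp) :
    SUOL μ (l01 Bool) Xp := by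
  have hc : 0 < 2 * L.c := by linarith [L.one_le_c hpos]
  refine suol_l01_of_suol_of_decoder (fun b => if b then y₁ else y₂)
    (fun y => decide (L.loss y₁ y ≤ L.loss y₂ y)) (div_pos hpos hc)
    (measurable_to_bool <| by
      simpa only [Set.preimage, Set.mem_singleton_iff, decide_eq_true_eq] using
        measurableSet_le (L.measurable_loss y₁) (L.measurable_loss y₂))
    (fun y b hb => ?_) h
  have htri := L.triangle y₁ y y₂
  rw [div_le_iff₀ hc]
  cases b <;> simp only [ne_eq, decide_eq_true_eq, decide_eq_false_iff_not, not_le,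
    Bool.false_eq_true, if_true, if_false] at hb ⊢ <;>
  nlinarith [L.symm y y₁, L.symm y y₂, L.c_nonneg]

theorem suol_l01_nat_of_suol (hL : ¬ L.TotBounded) (h : SUOL μ L Xp) : SUOL μ (l01 ℕ) Xp := by
  classical
  let _ := L.mSpace
  obtain ⟨ε, hε, e, he⟩ := L.exists_pairwise_lt_loss_of_not_totBounded hL
  have hc : 0 < L.c := by linarith [L.one_le_c (hε.trans (he zero_ne_one))]
  obtain ⟨δ, hδ, hδε⟩ : ∃ δ > 0, L.c * (2 * δ) = ε :=
    ⟨ε / (2 * L.c), by positivity, by field_simp⟩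
  -- decode `y` as the first `n` with `e n` `δ`-close to `y`, or as `0` if there is none
  have hex : ∀ y, ∃ n, L.loss (e n) y < δ ∨ ∀ m, δ ≤ L.loss (e m) y := fun y => by
    by_cases hy : ∀ m, δ ≤ L.loss (e m) y
    · exact ⟨0, Or.inr hy⟩
    · simp only [not_forall, not_le] at hy
      exact hy.imp fun _ => Or.inl
  refine suol_l01_of_suol_of_decoder e (fun y => Nat.find (hex y)) hδ
    (measurable_find hex fun n => ?_) (fun y z hz => ?_) h
  · exact (measurableSet_lt (L.measurable_loss _) measurable_const).union <|
      (Measurable.forall fun m =>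
        (measurableSet_le (measurable_const (a := δ)) (L.measurable_loss (e m))).mem).setOf
  · by_contra! hyz
    rcases Nat.find_spec (hex y) with hclose | hfar
    · have hsum : L.loss y (e (Nat.find (hex y))) + L.loss y (e z) < 2 * δ := by
        linarith [L.symm y (e (Nat.find (hex y)))]
      have := (L.triangle _ y _).trans_lt (mul_lt_mul_of_pos_left hsum hc)
      exact (he hz).not_gt (hδε ▸ this)
    · exact (hfar z).not_gt (L.symm y (e z) ▸ hyz)

end Decoding

section OneVsAll

variable {X : Type}

/-- The fallback `t` makes the search total; for a target bounded by `N` it costs at most `N`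
extra mistakes. -/
def oneVsAll (f : (t : ℕ) → (Fin t → X) → (Fin t → Bool) → X → Bool) :
    (t : ℕ) → (Fin t → X) → (Fin t → ℕ) → X → ℕ :=
  fun t xs ns x => Nat.find (⟨t, Or.inl rfl⟩ : ∃ j, j = t ∨ f t xs (fun i => decide (ns i = j)) x)

variable (f : (t : ℕ) → (Fin t → X) → (Fin t → Bool) → X → Bool)

theorem oneVsAll_eq {t n : ℕ} {xs : Fin t → X} {ns : Fin t → ℕ} {x : X} (hn : n < t)
    (h : ∀ j ≤ n, f t xs (fun i => decide (ns i = j)) x = decide (n = j)) :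
    oneVsAll f t xs ns x = n := by
  rw [oneVsAll, Nat.find_eq_iff]
  refine ⟨Or.inr (by simpa using h n le_rfl), fun m hm => ?_⟩
  rw [h m hm.le]
  simp [hm.ne', (hm.trans hn).ne]

theorem l01_loss_oneVsAll_le {t n N : ℕ} (xs : Fin t → X) (ns : Fin t → ℕ) (x : X)
    (hn : n < N) :
    (l01 ℕ).loss (oneVsAll f t xs ns x) n ≤ (if t < N then 1 else 0) + ∑ j ∈ Finset.range N,
      (l01 Bool).loss (f t xs (fun i => decide (ns i = j)) x) (decide (n = j)) := by
  have hsum := Finset.sum_nonneg fun j (_ : j ∈ Finset.range N) =>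
    (l01 Bool).nonneg (f t xs (fun i => decide (ns i = j)) x) (decide (n = j))
  have hle := l01_loss_le_one (oneVsAll f t xs ns x) n
  by_cases htN : t < N
  · rw [if_pos htN]; linarith
  by_cases hall : ∀ j ≤ n, f t xs (fun i => decide (ns i = j)) x = decide (n = j)
  · rw [oneVsAll_eq f (by omega) hall, (l01 ℕ).loss_self]; simpa [htN] using hsum
  · push Not at hall
    obtain ⟨j, hjn, hj⟩ := hall
    have hterm : (l01 Bool).loss (f t xs (fun i => decide (ns i = j)) x) (decide (n = j)) = 1 := by
      simp [l01_loss_eq, hj]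
    have := Finset.single_le_sum (fun j _ => (l01 Bool).nonneg _ _)
      (Finset.mem_range.2 (hjn.trans_lt hn)) (f := fun j =>
        (l01 Bool).loss (f t xs (fun i => decide (ns i = j)) x) (decide (n = j)))
    simp only [if_neg htN]
    linarith

variable [MeasurableSpace X]

theorem isLearningRule_oneVsAll (hf : IsLearningRule (l01 Bool) f) :
    IsLearningRule (l01 ℕ) (oneVsAll f) := by
  rw [isLearningRule_l01_iff] at hf ⊢
  intro t
  refine measurable_find _ fun j => ?_
  have hdec : Measurable fun n : ℕ => decide (n = j) := measurable_of_countable _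
  have hj : Measurable fun p : (Fin t → X) × (Fin t → ℕ) × X =>
      f t p.1 (fun i => decide (p.2.1 i = j)) p.2.2 :=
    (hf t).comp <| measurable_fst.prodMk <| (measurable_pi_lambda _ fun i =>
      hdec.comp ((measurable_pi_apply i).comp measurable_snd.fst)).prodMk measurable_snd.snd
  exact (MeasurableSet.const _).union (hj (measurableSet_singleton true))

theorem consistent_oneVsAll {Ω : Type} [MeasurableSpace Ω] {μ : Measure Ω} {Xp : ℕ → Ω → X}
    (hf : ∀ g : X → Bool, (l01 Bool).MeasurableFun g → Consistent μ (l01 Bool) Xp f g)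
    {N : ℕ} {fstar : X → ℕ} (hfstar : Measurable fstar) (hN : ∀ x, fstar x < N) :
    Consistent μ (l01 ℕ) Xp (oneVsAll f) fstar := by
  have hae : ∀ᵐ ω ∂μ, ∀ j : ℕ, Tendsto
      (fun T => avgLoss (l01 Bool) Xp f (fun x => decide (fstar x = j)) T ω) atTop (𝓝 0) :=
    ae_all_iff.2 fun j => hf _ (measurableFun_l01_iff.2
      ((measurable_of_countable fun n => decide (n = j)).comp hfstar))
  filter_upwards [hae] with ω hω
  have hind : Tendsto (fun t : ℕ => if t < N then (1 : ℝ) else 0) atTop (𝓝 0) :=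
    tendsto_const_nhds.congr' (eventually_ge_atTop N |>.mono fun t ht => by simp [not_lt.2 ht])
  exact tendsto_cesaro_zero_of_le (fun t => (l01 ℕ).nonneg _ _)
    (fun t => l01_loss_oneVsAll_le f _ _ _ (hN _))
    (tendsto_cesaro_zero_add hind.cesaro (tendsto_cesaro_zero_sum _ fun j _ => hω j))

end OneVsAll

section QuantizedRule

variable {X Y : Type} (g : (t : ℕ) → (Fin t → X) → (Fin t → ℕ) → X → ℕ) (q : ℕ → Y → ℕ)
  (r : ℕ → ℕ → Y)

noncomputable def cumLoss01 {t : ℕ} (xs : Fin t → X) (ys : Fin t → Y) (j : ℕ) : ℝ :=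
  ∑ s : Fin t, (l01 ℕ).loss
    (g s (xs ∘ Fin.castLE s.2.le) (q j ∘ ys ∘ Fin.castLE s.2.le) (xs s)) (q j (ys s))

noncomputable def quantizedRule : (t : ℕ) → (Fin t → X) → (Fin t → Y) → X → Y :=
  fun t xs ys x =>
    r (selectScale (cumLoss01 g q xs ys) t)
      (g t xs (q (selectScale (cumLoss01 g q xs ys) t) ∘ ys) x)

theorem cumLoss01_eq_sum_range {Ω : Type} (Xp : ℕ → Ω → X) (fstar : X → Y) (ω : Ω) (t j : ℕ) :
    cumLoss01 g q (fun i : Fin t => Xp i ω) (fun i => fstar (Xp i ω)) j =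
      ∑ s ∈ Finset.range t, (l01 ℕ).loss
        (g s (fun i : Fin s => Xp i ω) (fun i => q j (fstar (Xp i ω))) (Xp s ω))
        (q j (fstar (Xp s ω))) :=
  Fin.sum_univ_eq_sum_range (fun s => (l01 ℕ).loss
    (g s (fun i : Fin s => Xp i ω) (fun i => q j (fstar (Xp i ω))) (Xp s ω))
    (q j (fstar (Xp s ω)))) t

variable [MeasurableSpace X]

theorem isLearningRule_quantizedRule (L : NearMetric Y)
    (hg : ∀ t, Measurable fun p : (Fin t → X) × (Fin t → ℕ) × X => g t p.1 p.2.1 p.2.2)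
    (hq : ∀ k, Measurable[L.mSpace] (q k)) : IsLearningRule L (quantizedRule g q r) := by
  let _ := L.mSpace
  intro t
  have hinput : ∀ (s : Fin t) (k : ℕ), Measurable fun p : (Fin t → X) × (Fin t → Y) × X =>
      (p.1 ∘ Fin.castLE s.2.le, q k ∘ p.2.1 ∘ Fin.castLE s.2.le, p.1 s) := fun s k =>
    (measurable_pi_lambda _ fun i => (measurable_pi_apply _).comp measurable_fst).prodMk <|
      (measurable_pi_lambda _ fun i => (hq k).comp ((measurable_pi_apply _).comp
        measurable_snd.fst)).prodMk ((measurable_pi_apply s).comp measurable_fst)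
  have hcum : ∀ j, Measurable fun p : (Fin t → X) × (Fin t → Y) × X => cumLoss01 g q p.1 p.2.1 j :=
    fun j => Finset.measurable_sum _ fun s _ =>
      (measurable_of_countable fun n : ℕ × ℕ => (l01 ℕ).loss n.1 n.2).comp <|
        ((hg s).comp (hinput s j)).prodMk
          ((hq j).comp ((measurable_pi_apply s).comp measurable_snd.fst))
  have hscale : Measurable fun p : (Fin t → X) × (Fin t → Y) × X =>
      selectScale (cumLoss01 g q p.1 p.2.1) t :=
    measurable_findGreatest fun k _ => (Measurable.forall fun j => measurable_const.imp
      (measurableSet_le (hcum j) measurable_const).mem).setOf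
  have hG : ∀ k, Measurable fun p : (Fin t → X) × (Fin t → Y) × X => g t p.1 (q k ∘ p.2.1) p.2.2 :=
    fun k => (hg t).comp (measurable_fst.prodMk ((measurable_pi_lambda _ fun i =>
      (hq k).comp ((measurable_pi_apply i).comp measurable_snd.fst)).prodMk measurable_snd.snd))
  exact (measurable_of_countable fun n : ℕ × ℕ => r n.1 n.2).comp <| hscale.prodMk <|
    (measurable_from_prod_countable_left (f := fun pk : ((Fin t → X) × (Fin t → Y) × X) × ℕ =>
      g t pk.1.1 (q pk.2 ∘ pk.1.2.1) pk.1.2.2) hG).comp (measurable_id.prodMk hscale)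

end QuantizedRule

theorem suol_of_consistent_quantized {X Y Ω : Type} [MeasurableSpace X] [MeasurableSpace Ω]
    {μ : Measure Ω} {Xp : ℕ → Ω → X} (L : NearMetric Y) {M : ℝ}
    (hM : ∀ y₁ y₂, L.loss y₁ y₂ ≤ M) {q : ℕ → Y → ℕ} {r : ℕ → ℕ → Y}
    (hq : ∀ k, Measurable[L.mSpace] (q k)) (happ : ∀ k y, L.loss (r k (q k y)) y ≤ ((k : ℝ) + 1)⁻¹)
    {g : (t : ℕ) → (Fin t → X) → (Fin t → ℕ) → X → ℕ} (hg : IsLearningRule (l01 ℕ) g)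
    (hgc : ∀ k fstar, L.MeasurableFun fstar → Consistent μ (l01 ℕ) Xp g (q k ∘ fstar)) :
    SUOL μ L Xp := by
  refine ⟨quantizedRule g q r,
    isLearningRule_quantizedRule g q r L (isLearningRule_l01_iff.1 hg) hq, fun fstar hfstar => ?_⟩
  filter_upwards [ae_all_iff.2 fun k => hgc k fstar hfstar] with ω hω
  set l : ℕ → ℕ → ℝ := fun j s => (l01 ℕ).loss
    (g s (fun i : Fin s => Xp i ω) (fun i => q j (fstar (Xp i ω))) (Xp s ω)) (q j (fstar (Xp s ω)))
  set κ := fun t => selectScale (fun j => ∑ s ∈ Finset.range t, l j s) t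
  have hκ : Tendsto κ atTop atTop := tendsto_selectScale_atTop hω
  have hscale : Tendsto (fun t => ((κ t : ℝ) + 1)⁻¹) atTop (𝓝 0) :=
    (by simpa using tendsto_one_div_add_atTop_nhds_zero_nat (𝕜 := ℝ) :
      Tendsto (fun n : ℕ => ((n : ℝ) + 1)⁻¹) atTop (𝓝 0)).comp hκ
  refine tendsto_cesaro_zero_of_le (fun t => L.nonneg _ _) (fun t => ?_)
    (tendsto_cesaro_zero_add
      (tendsto_cesaro_zero_const_mul (L.c * M) (tendsto_cesaro_selectScale
        (fun j s => (l01 ℕ).nonneg _ _) (fun j s => l01_loss_le_one _ _) hω))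
      (tendsto_cesaro_zero_const_mul L.c hscale.cesaro))
  have hrule : quantizedRule g q r t (fun i : Fin t => Xp i ω) (fun i => fstar (Xp i ω)) (Xp t ω) =
      r (κ t) (g t (fun i : Fin t => Xp i ω) (fun i => q (κ t) (fstar (Xp i ω))) (Xp t ω)) := by
    simp only [quantizedRule, funext (cumLoss01_eq_sum_range g q Xp fstar ω t), κ, l]; rfl
  rw [hrule]
  calc _ ≤ L.c * (M * l (κ t) t + ((κ t : ℝ) + 1)⁻¹) :=
        (L.loss_le_mul_l01_add hM _ _ _ _).trans (by gcongr; exacts [L.c_nonneg, happ _ _])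
    _ = L.c * M * l (κ t) t + L.c * ((κ t : ℝ) + 1)⁻¹ := by ring

theorem suol_totally_bounded_dichotomy_general
    {𝒳 : Type} [MeasurableSpace 𝒳]
    {Y : Type} (L : NearMetric Y) (hsep : L.Separable) (hbd : L.BoundedPos)
    {Ω : Type} [MeasurableSpace Ω] (μ : Measure Ω)
    (Xp : ℕ → Ω → 𝒳) :
    (L.TotBounded → (SUOL μ L Xp ↔ SUOL μ (l01 Bool) Xp)) ∧
    (¬ L.TotBounded → (SUOL μ L Xp ↔ SUOL μ (l01 ℕ) Xp)) := by
  obtain ⟨⟨y₁, y₂, hpos⟩, M, hM⟩ := hbd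
  refine ⟨fun hTB => ⟨suol_l01_bool_of_suol hpos, fun ⟨f, hf, hfc⟩ => ?_⟩,
    fun hTB => ⟨suol_l01_nat_of_suol hTB, fun ⟨g, hg, hgc⟩ => ?_⟩⟩
  · have : Nonempty Y := ⟨y₁⟩
    choose N s hs using fun k : ℕ => hTB.exists_finite_seq (ε := ((k : ℝ) + 1)⁻¹) (by positivity)
    obtain ⟨q, hq, happ, hmin⟩ :=
      L.exists_measurable_quantizer s fun k y => (hs k y).imp fun _ => And.right
    refine suol_of_consistent_quantized L hM hq happ (isLearningRule_oneVsAll f hf)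
      fun k fstar hfstar => consistent_oneVsAll f hfc ((hq k).comp hfstar) (N := N k) fun x => ?_
    obtain ⟨i, hi, hiy⟩ := hs k (fstar x)
    exact (hmin k _ i hiy).trans_lt hi
  · obtain ⟨s, hs⟩ := hsep
    obtain ⟨q, hq, happ, -⟩ := L.exists_measurable_quantizer (fun _ => s)
      fun k y => (hs y _ (by positivity)).imp fun _ => le_of_lt
    exact suol_of_consistent_quantized L hM hq happ hg
      fun k fstar hfstar => hgc _ (measurableFun_l01_iff.2 ((hq k).comp hfstar))

/-- Let `(Y, L)` be a separable near-metric value space with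
`0 < ℓ̄ < ∞`. If it is totally bounded, then `SUOL_{(Y,L)} = SUOL_{({0,1},ℓ01)}`;
otherwise `SUOL_{(Y,L)} = SUOL_{(ℕ,ℓ01)}`. -/
theorem suol_totally_bounded_dichotomy
    {𝒳 : Type} [MetricSpace 𝒳] [TopologicalSpace.SeparableSpace 𝒳]
    [MeasurableSpace 𝒳] [BorelSpace 𝒳]
    {Y : Type} (L : NearMetric Y) (hsep : L.Separable) (hbd : L.BoundedPos)
    {Ω : Type} [MeasurableSpace Ω] (μ : Measure Ω) [IsProbabilityMeasure μ]
    (Xp : ℕ → Ω → 𝒳) (hX : ∀ t, Measurable (Xp t)) :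
    (L.TotBounded → (SUOL μ L Xp ↔ SUOL μ (l01 Bool) Xp)) ∧
    (¬ L.TotBounded → (SUOL μ L Xp ↔ SUOL μ (l01 ℕ) Xp)) :=
  suol_totally_bounded_dichotomy_general L hsep hbd μ Xp
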